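/- Let α ∈ (0,1), β > 0 and a₂ > a₁ > 0, b₂ ≥ b₁ ≥ 0 with a₂b₁ = a₁b₂ (restriction (T1)) and a₂ ≥ 2b₂·cosh(βπ/2)·√(1 + cot²(απ/2)·tanh²(βπ/2)) (restriction (T2₂)). Then Im P(iω)·Re Q(iω) − Re P(iω)·Im Q(iω) ≥ 0 for every ω > 0 (i.e., the loss modulus Im Ê(ω) is nonnegative). -/

import Mathlib

/-!
For `s ≠ 0` one has `s^(α ± iβ) = s^α e^(±iβ log s)`, so `φ_{a,b}(s) = 1 + s^α (a + 2b cos(β log s))`.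
The loss modulus is `Im (P(s) · conj Q(s))`; by (T1) the product of the two brackets has real
part only, which leaves `Im (s^α ((a₂ - a₁) + 2(b₂ - b₁) cos(β log s)))`. At `s = iω` the factor
`s^α` has argument `απ/2`, and `|Im (e^(iαπ/2) cos ζ)| ≤ sin(απ/2) · Ccot α β` whenever
`Im ζ = βπ/2` (Cauchy–Schwarz), while (T1) and (T2₂) give `2(b₂ - b₁) Ccot α β ≤ a₂ - a₁`.
-/

/-- `φ_{a,b}(s) = 1 + a·s^α + b·(s^{α+iβ} + s^{α−iβ})`, with principal complex powers. -/
noncomputable def phi (α β a b : ℝ) (s : ℂ) : ℂ :=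
  1 + (a : ℂ) * s ^ (α : ℂ) +
    (b : ℂ) * (s ^ ((α : ℂ) + Complex.I * (β : ℂ)) + s ^ ((α : ℂ) - Complex.I * (β : ℂ)))

/-- The constant `cosh(βπ/2)·√(1 + cot²(απ/2)·tanh²(βπ/2))` appearing in restrictions (T2). -/
noncomputable def Ccot (α β : ℝ) : ℝ :=
  Real.cosh (β * (Real.pi / 2)) *
    Real.sqrt (1 + (Real.cot (α * (Real.pi / 2)) * Real.tanh (β * (Real.pi / 2))) ^ 2)

open Complex

namespace Complex

theorem cos_re (z : ℂ) : (cos z).re = Real.cos z.re * Real.cosh z.im := by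
  have h := cos_add_mul_I z.re z.im
  rw [re_add_im] at h
  simp [h, cos_ofReal_re, cosh_ofReal_re, sin_ofReal_im, sinh_ofReal_im]

theorem cos_im (z : ℂ) : (cos z).im = -(Real.sin z.re * Real.sinh z.im) := by
  have h := cos_add_mul_I z.re z.im
  rw [re_add_im] at h
  simp [h, cos_ofReal_im, cosh_ofReal_im, sin_ofReal_re, sinh_ofReal_re]

theorem cpow_add_I_mul_add_cpow_sub_I_mul {s : ℂ} (hs : s ≠ 0) (α β : ℂ) :
    s ^ (α + I * β) + s ^ (α - I * β) = 2 * s ^ α * cos (β * log s) := by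
  rw [mul_right_comm, two_cos]
  simp only [cpow_def_of_ne_zero hs]
  rw [add_mul, ← exp_add, ← exp_add]
  ring_nf

theorem cpow_ofReal_mul_im {s : ℂ} (hs : s ≠ 0) (α : ℝ) (w : ℂ) :
    (s ^ (α : ℂ) * w).im =
      Real.exp (α * Real.log ‖s‖) * (Real.sin (α * arg s) * w.re + Real.cos (α * arg s) * w.im) := by
  rw [cpow_def_of_ne_zero hs, mul_im, exp_re, exp_im]
  simp only [mul_re, log_re, ofReal_re, log_im, ofReal_im, mul_zero, sub_zero, mul_im, zero_add]
  ring_nf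

end Complex

theorem phi_eq_one_add_cpow_mul {s : ℂ} (hs : s ≠ 0) (α β a b : ℝ) :
    phi α β a b s = 1 + s ^ (α : ℂ) * (a + 2 * b * cos (β * log s)) := by
  rw [phi, cpow_add_I_mul_add_cpow_sub_I_mul hs]
  ring

theorem im_mul_re_sub_re_mul_im_one_add_mul (z p q : ℂ) (h : (p * (starRingEnd ℂ) q).im = 0) :
    (1 + z * p).im * (1 + z * q).re - (1 + z * p).re * (1 + z * q).im = (z * (p - q)).im := by
  simp only [mul_im, mul_re, conj_re, conj_im, add_re, add_im, one_re, one_im, sub_re, sub_im] at h ⊢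
  linear_combination (z.re ^ 2 + z.im ^ 2) * h

theorem abs_mul_cos_sub_mul_sin_le (x y t : ℝ) :
    |x * Real.cos t - y * Real.sin t| ≤ √(x ^ 2 + y ^ 2) :=
  Real.abs_le_sqrt (by nlinarith [sq_nonneg (x * Real.sin t + y * Real.cos t), Real.sin_sq_add_cos_sq t])

theorem sqrt_sin_sq_mul_cosh_sq_add {θ : ℝ} (hθ : 0 < Real.sin θ) (h : ℝ) :
    √((Real.sin θ * Real.cosh h) ^ 2 + (Real.cos θ * Real.sinh h) ^ 2) =
      Real.sin θ * (Real.cosh h * √(1 + (Real.cot θ * Real.tanh h) ^ 2)) := by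
  have hch := Real.cosh_pos h
  rw [Real.sqrt_eq_iff_eq_sq (by positivity) (by positivity)]
  simp only [mul_pow]
  rw [Real.sq_sqrt (by positivity), Real.cot_eq_cos_div_sin, Real.tanh_eq_sinh_div_cosh]
  field_simp

theorem abs_sin_mul_cos_re_add_cos_mul_cos_im_le {θ : ℝ} (hθ : 0 < Real.sin θ) (ζ : ℂ) :
    |Real.sin θ * (cos ζ).re + Real.cos θ * (cos ζ).im| ≤
      Real.sin θ * (Real.cosh ζ.im * √(1 + (Real.cot θ * Real.tanh ζ.im) ^ 2)) := by
  rw [← sqrt_sin_sq_mul_cosh_sq_add hθ, cos_re, cos_im]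
  convert abs_mul_cos_sub_mul_sin_le (Real.sin θ * Real.cosh ζ.im) (Real.cos θ * Real.sinh ζ.im) ζ.re
    using 2
  ring

theorem two_mul_sub_mul_le_sub {a₁ a₂ b₁ b₂ K : ℝ} (ha₂ : 0 < a₂) (ha : a₁ ≤ a₂)
    (hT1 : a₂ * b₁ = a₁ * b₂) (hK : 2 * b₂ * K ≤ a₂) : 2 * (b₂ - b₁) * K ≤ a₂ - a₁ := by
  have : 0 ≤ a₂ * ((a₂ - a₁) - 2 * (b₂ - b₁) * K) := by
    have := mul_nonneg (sub_nonneg.2 hK) (sub_nonneg.2 ha)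
    linear_combination this - 2 * K * hT1
  nlinarith

theorem stmt_6_general (α β a₁ a₂ b₁ b₂ : ℝ) (hα : α ∈ Set.Ioo (0:ℝ) 1)
    (ha₁ : 0 < a₁) (ha : a₁ < a₂) (hb : b₁ ≤ b₂)
    (hT1 : a₂ * b₁ = a₁ * b₂) (hT2 : a₂ ≥ 2 * b₂ * Ccot α β) :
    ∀ ω : ℝ, 0 < ω →
      0 ≤ (phi α β a₂ b₂ (Complex.I * (ω : ℂ))).im * (phi α β a₁ b₁ (Complex.I * (ω : ℂ))).re -
        (phi α β a₂ b₂ (Complex.I * (ω : ℂ))).re * (phi α β a₁ b₁ (Complex.I * (ω : ℂ))).im := by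
  intro ω hω
  set s := I * (ω : ℂ)
  have hs : s ≠ 0 := mul_ne_zero I_ne_zero (ofReal_ne_zero.2 hω.ne')
  have harg : arg s = Real.pi / 2 := by
    rw [show s = (ω : ℂ) * I from mul_comm _ _, arg_real_mul _ hω, arg_I]
  set ζ := (β : ℂ) * log s
  have hζ : ζ.im = β * (Real.pi / 2) := by simp [ζ, log_im, harg]
  have hsin : 0 < Real.sin (α * (Real.pi / 2)) :=
    Real.sin_pos_of_pos_of_lt_pi (by nlinarith [hα.1, Real.pi_pos]) (by nlinarith [hα.2, Real.pi_pos])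
  have hbound := abs_sin_mul_cos_re_add_cos_mul_cos_im_le hsin ζ
  rw [hζ, ← Ccot] at hbound
  have hK := two_mul_sub_mul_le_sub (ha₁.trans ha) ha.le hT1 hT2
  rw [phi_eq_one_add_cpow_mul hs, phi_eq_one_add_cpow_mul hs,
    im_mul_re_sub_re_mul_im_one_add_mul, cpow_ofReal_mul_im hs, harg]
  · refine mul_nonneg (Real.exp_pos _).le ?_
    simp only [sub_re, add_re, ofReal_re, mul_re, re_ofNat, im_ofNat, ofReal_im, mul_zero,
      sub_zero, mul_im, zero_mul, add_zero, sub_im, add_im, zero_add]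
    linarith [mul_le_mul_of_nonneg_left (abs_le.1 hbound).1 (sub_nonneg.2 hb),
      mul_le_mul_of_nonneg_left hK hsin.le]
  · simp only [map_add, conj_ofReal, map_mul, mul_im, add_re, ofReal_re, mul_re, re_ofNat,
      im_ofNat, ofReal_im, mul_zero, sub_zero, zero_mul, add_zero, add_im, conj_re, conj_im,
      neg_zero, mul_neg, zero_add]
    linear_combination (-2 * (cos ζ).im) * hT1

/-- Under `a₂ > a₁ > 0`, `b₂ ≥ b₁ ≥ 0`, (T1) `a₂b₁ = a₁b₂` and (T2₂)
`a₂ ≥ 2b₂·cosh(βπ/2)·√(1 + cot²(απ/2)·tanh²(βπ/2))`, the loss modulus is nonnegative: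
`Im P(iω)·Re Q(iω) − Re P(iω)·Im Q(iω) ≥ 0` for every `ω > 0`. -/
theorem stmt_6 (α β a₁ a₂ b₁ b₂ : ℝ) (hα : α ∈ Set.Ioo (0:ℝ) 1) (hβ : 0 < β)
    (ha₁ : 0 < a₁) (ha : a₁ < a₂) (hb₁ : 0 ≤ b₁) (hb : b₁ ≤ b₂)
    (hT1 : a₂ * b₁ = a₁ * b₂) (hT2 : a₂ ≥ 2 * b₂ * Ccot α β) :
    ∀ ω : ℝ, 0 < ω →
      0 ≤ (phi α β a₂ b₂ (Complex.I * (ω : ℂ))).im * (phi α β a₁ b₁ (Complex.I * (ω : ℂ))).re -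
        (phi α β a₂ b₂ (Complex.I * (ω : ℂ))).re * (phi α β a₁ b₁ (Complex.I * (ω : ℂ))).im :=
  stmt_6_general α β a₁ a₂ b₁ b₂ hα ha₁ ha hb hT1 hT2
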